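/- Suppose every reviewer reviews exactly μ ≥ 3 papers, and (M, f) is pairwise unanimous. Then for any two reviewers i_1, i_2, the number of papers reviewed by both satisfies |P_{i_1} ∩ P_{i_2}| ∈ {0, 1, μ}. Equivalently, if two reviewers share at least two papers, they review exactly the same set of papers. -/

import Mathlib

/-- A profile: each reviewer `i` submits a ranking of the papers in her review
set `P i`, encoded as a position function injective on `P i`. -/
def Profile (m n : ℕ) (P : Fin m → Finset (Fin n)) :=
  ∀ i : Fin m, {r : Fin n → ℕ // Set.InjOn r ↑(P i)}

/-- Pairwise unanimity. -/
def PairwiseUnanimous {m n : ℕ} (P : Fin m → Finset (Fin n))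
    (f : Profile m n P → Equiv.Perm (Fin n)) : Prop :=
  ∀ (π : Profile m n P) (p q : Fin n),
    (∃ i, p ∈ P i ∧ q ∈ P i) →
    (∀ i, p ∈ P i → q ∈ P i → (π i).1 p < (π i).1 q) →
    f π p < f π q
/-! If two reviewers share two papers `p ≠ q` but not all papers, pick `r` reviewed by the second
only. Then `p, r, q` followed by the rest of the first reviewer's papers is a cycle of `μ + 1`
distinct papers in which consecutive papers are co-reviewed. No reviewer covers the whole cycle, so
each can rank the cycle starting from a paper she does not review. Then every edge she sees
increases, and pairwise unanimity would force the aggregate ranking to increase all the way around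
the cycle. -/

open Function Finset

namespace Fin

variable {k : ℕ}

theorem val_sub_lt_val_add_one_sub {s t : Fin (k + 1)} (h : s + 1 ≠ t) :
    (s - t).val < (s + 1 - t).val := by
  have hlast : s - t ≠ last k := fun h' => h (by
    rw [← sub_add_cancel s t, h', add_right_comm, last_add_one, zero_add])
  rw [add_sub_right_comm, val_add_one, if_neg hlast]
  exact Nat.lt_succ_self _

theorem not_forall_lt_apply_add_one {β : Type*} [LinearOrder β] (g : Fin (k + 1) → β) :
    ¬ ∀ s, g s < g (s + 1) := fun h =>
  let ⟨s, hs⟩ := Finite.exists_max g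
  (h s).not_ge (hs _)

end Fin

section Cycle

variable {k m n : ℕ} {c : Fin (k + 1) → Fin n}

open Classical in
noncomputable def cycleRank (c : Fin (k + 1) → Fin n) (t : Fin (k + 1)) (y : Fin n) : ℕ :=
  if y ∈ Set.range c then (invFun c y - t).val else k + 1 + y.val

theorem cycleRank_apply (hc : Injective c) (t s : Fin (k + 1)) :
    cycleRank c t (c s) = (s - t).val := by
  simp [cycleRank, leftInverse_invFun hc s]

theorem cycleRank_injective (hc : Injective c) (t : Fin (k + 1)) :
    Injective (cycleRank c t) := by
  intro y z h
  by_cases hy : y ∈ Set.range c <;> by_cases hz : z ∈ Set.range c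
  · obtain ⟨a, rfl⟩ := hy
    obtain ⟨b, rfl⟩ := hz
    rw [cycleRank_apply hc, cycleRank_apply hc] at h
    exact congrArg c (sub_left_injective (Fin.val_injective h))
  all_goals
    simp only [cycleRank, hy, hz, if_true, if_false] at h
    exact Fin.val_injective (by omega)

theorem not_pairwiseUnanimous_of_cycle {P : Fin m → Finset (Fin n)}
    (f : Profile m n P → Equiv.Perm (Fin n)) (hc : Injective c)
    (hadj : ∀ s, ∃ i, c s ∈ P i ∧ c (s + 1) ∈ P i) (hcover : ∀ i, ∃ s, c s ∉ P i) :
    ¬ PairwiseUnanimous P f := by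
  intro hpu
  choose t ht using hcover
  -- reviewer `i` ranks `c s` at position `s - t i`, which wraps around only on the edge into
  -- `c (t i)`, a paper she does not review
  let π : Profile m n P := fun i => ⟨cycleRank c (t i), (cycleRank_injective hc _).injOn⟩
  refine Fin.not_forall_lt_apply_add_one (fun s => f π (c s))
    fun s => hpu π _ _ (hadj s) fun i _ hi => ?_
  change cycleRank c (t i) (c s) < cycleRank c (t i) (c (s + 1))
  rw [cycleRank_apply hc, cycleRank_apply hc]
  exact Fin.val_sub_lt_val_add_one_sub fun h => ht i (h ▸ hi)

end Cycle

theorem Finset.exists_cycle_of_two_common {α : Type*} [DecidableEq α] {A B : Finset α}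
    {p q r : α} (hp : p ∈ A ∩ B) (hq : q ∈ A ∩ B) (hpq : p ≠ q) (hrB : r ∈ B) (hrA : r ∉ A) :
    ∃ (k : ℕ) (c : Fin (k + 1) → α), Injective c ∧ #A < k + 1 ∧
      ∀ s, (c s ∈ A ∧ c (s + 1) ∈ A) ∨ (c s ∈ B ∧ c (s + 1) ∈ B) := by
  rw [mem_inter] at hp hq
  set T := A \ {p, q}
  have hT : #T + 2 = #A := by
    rw [← card_pair hpq]
    exact card_sdiff_add_card_eq_card (insert_subset hp.1 (singleton_subset_iff.2 hq.1))
  have hrange : Set.range (fun j => (T.equivFin.symm j : α)) = T :=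
    (T.equivFin.symm.surjective.range_comp _).trans Subtype.range_coe
  set c : Fin (#T + 1 + 1 + 1) → α :=
    Fin.cons p (Fin.cons r (Fin.cons q fun j => T.equivFin.symm j))
  have hc : Injective c := by
    simp only [c, Fin.cons_injective_iff, Fin.range_cons, hrange, Set.mem_insert_iff,
      mem_coe, not_or]
    have hrT : r ∉ T := fun h => hrA (mem_sdiff.1 h).1
    exact ⟨⟨fun h => hrA (h ▸ hp.1), hpq, by simp [T]⟩, ⟨fun h => hrA (h ▸ hq.1), hrT⟩,
      by simp [T], Subtype.val_injective.comp (Equiv.injective _)⟩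
  have hcA : ∀ s, s ≠ 1 → c s ∈ A := by
    intro s hs
    have hmem : c s ∈ insert p (insert r (insert q (T : Set α))) := by
      rw [← hrange, ← Fin.range_cons, ← Fin.range_cons, ← Fin.range_cons]
      exact ⟨s, rfl⟩
    rcases hmem with h | h | h | h
    · exact h ▸ hp.1
    · exact absurd (hc (h.trans rfl)) hs
    · exact h ▸ hq.1
    · exact (mem_sdiff.1 h).1
  refine ⟨#T + 1 + 1, c, hc, by omega, fun s => ?_⟩
  by_cases hs0 : s = 0
  · subst hs0
    exact Or.inr ⟨hp.2, hrB⟩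
  by_cases hs1 : s = 1
  · subst hs1
    exact Or.inr ⟨hrB, hq.2⟩
  exact Or.inl ⟨hcA s hs1, hcA _ fun h => hs0 (by simpa using h)⟩

theorem pu_intersection_sizes_general {m n μ : ℕ}
    (P : Fin m → Finset (Fin n)) (hcard : ∀ i, (P i).card = μ)
    (f : Profile m n P → Equiv.Perm (Fin n))
    (hpu : PairwiseUnanimous P f) :
    ∀ i₁ i₂ : Fin m, (P i₁ ∩ P i₂).card ∈ ({0, 1, μ} : Set ℕ) := by
  intro i₁ i₂
  by_contra hsize
  simp only [Set.mem_insert_iff, Set.mem_singleton_iff, not_or] at hsize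
  obtain ⟨hne0, hne1, hneμ⟩ := hsize
  obtain ⟨p, hp, q, hq, hpq⟩ := one_lt_card.1 (by omega : 1 < #(P i₁ ∩ P i₂))
  obtain ⟨r, hr₂, hr⟩ := exists_of_ssubset <|
    inter_subset_right.ssubset_of_ne fun h => hneμ (h ▸ hcard i₂)
  obtain ⟨k, c, hc, hlen, hadj⟩ :=
    exists_cycle_of_two_common hp hq hpq hr₂ fun hr₁ => hr (mem_inter.2 ⟨hr₁, hr₂⟩)
  refine not_pairwiseUnanimous_of_cycle f hc (fun s => ?_) (fun i => ?_) hpu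
  · exact (hadj s).elim (⟨i₁, ·⟩) (⟨i₂, ·⟩)
  · by_contra! hcovered
    have := card_le_card_of_injOn (s := univ) c (fun s _ => hcovered s) hc.injOn
    rw [card_univ, Fintype.card_fin, hcard, ← hcard i₁] at this
    omega

/-- if every reviewer reviews exactly `μ ≥ 3` papers and `(M,f)`
is pairwise unanimous, then any two reviewers review either `0`, `1` or `μ`
papers in common (in the last case, the same set of papers). -/
theorem pu_intersection_sizes {m n μ : ℕ} (hμ : 3 ≤ μ)
    (P : Fin m → Finset (Fin n)) (hcard : ∀ i, (P i).card = μ)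
    (f : Profile m n P → Equiv.Perm (Fin n))
    (hpu : PairwiseUnanimous P f) :
    ∀ i₁ i₂ : Fin m, (P i₁ ∩ P i₂).card ∈ ({0, 1, μ} : Set ℕ) :=
  pu_intersection_sizes_general P hcard f hpu
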